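/- Let F = ℤ/2ℤ, X a finite set, and let T be such that End(C) is supported in bidegrees (0,q) with q ≤ 0, with the bidegree-(0,0) part spanned by Id_C (abstracting a pairing tangle). Let C̄ = C⊗R_X⊗Ξ_X be the preferred free resolution (with any R_X-action ρ on C). Then every nonzero R_X-linear chain endomorphism of C̄ of bidegree (0,0) equals the identity. -/

import Mathlib

/-!
STATEMENT 18: Let F = ℤ/2ℤ, X a finite set, and C a bigraded bounded complex
(abstracting the Bar-Natan complex of a pairing tangle) whose graded endomorphism
algebra is supported in bidegrees (0,q) with q ≤ 0 and whose bidegree-(0,0) part is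
spanned by Id_C.  Let C̄ = C⊗R_X⊗Ξ_X be the preferred free resolution (for any
R_X-action ρ on C).  Then every nonzero R_X-linear chain endomorphism of C̄ of
bidegree (0,0) equals the identity.

The bigrading of C̄ is induced from that of C: the variables x ∈ R_X have bidegree
(0,-2) and the ξ_x have bidegree (1,2) (so the monomial ξ^{-n} of Ξ contributes
(-n,-2n) and an R_X-monomial of degree k contributes (0,-2k)).
-/

set_option synthInstance.maxHeartbeats 1000000
set_option maxHeartbeats 1000000

noncomputable section
open scoped TensorProduct

abbrev F2 := ZMod 2

abbrev Rgen (X : Type) : Type :=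
  MvPolynomial X F2 ⧸
    Ideal.span (Set.range fun x : X => (MvPolynomial.X x : MvPolynomial X F2) ^ 2)

def rgen {X : Type} (x : X) : Rgen X := Ideal.Quotient.mk _ (MvPolynomial.X x)

abbrev XiX (X : Type) : Type := (X →₀ ℕ) →₀ F2

def ximon {X : Type} (n : X →₀ ℕ) : XiX X := Finsupp.single n 1

def xiMul {X : Type} [DecidableEq X] (x : X) : XiX X →ₗ[F2] XiX X :=
  Finsupp.lsum F2 fun n =>
    if n x = 0 then (0 : F2 →ₗ[F2] XiX X)
    else Finsupp.lsingle (n - Finsupp.single x 1)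

/-- The span of the `Ξ_X`-monomials of total degree `n`. -/
def Vn (X : Type) (k : ℕ) : Submodule F2 (XiX X) :=
  Submodule.span F2 {v | ∃ n : X →₀ ℕ, (n.sum fun _ m => m) = k ∧ v = ximon n}

/-- The span of the images in `R_X` of the monomials of total degree `k`. -/
def RXdeg (X : Type) (k : ℕ) : Submodule F2 (Rgen X) :=
  Submodule.span F2
    {y | ∃ m : X →₀ ℕ, (m.sum fun _ v => v) = k ∧
      y = Ideal.Quotient.mk _ (MvPolynomial.monomial m (1 : F2))}

variable (X : Type) [Fintype X] [DecidableEq X]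
variable (C : Type) [AddCommGroup C] [Module F2 C]

abbrev Cbar : Type := (Rgen X ⊗[F2] XiX X) ⊗[F2] C

/-- The differential of the preferred free resolution `C̄` of `(C, d, ρ)`. -/
def delBar (d : C →ₗ[F2] C) (ρ : X → C →ₗ[F2] C) : Cbar X C →ₗ[F2] Cbar X C :=
  TensorProduct.map LinearMap.id d +
    ∑ x : X,
      (TensorProduct.map
          (TensorProduct.map (LinearMap.mulLeft F2 (rgen x)) (xiMul x)) LinearMap.id +
        TensorProduct.map (TensorProduct.map LinearMap.id (xiMul x)) (ρ x))

/-- The `R_X`-action on `C̄` (multiplication on the middle factor). -/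
def midMul (x : X) : Cbar X C →ₗ[F2] Cbar X C :=
  TensorProduct.map
    (TensorProduct.map (LinearMap.mulLeft F2 (rgen x)) LinearMap.id) LinearMap.id

/-- The image in `C̄` of `(R_X-degree-k part) ⊗ (Ξ-degree-n part) ⊗ Cg(a,b)`. -/
def piece (Cg : ℤ × ℤ → Submodule F2 C) (a b : ℤ) (k n : ℕ) :
    Submodule F2 (Cbar X C) :=
  LinearMap.range
    (TensorProduct.map
      (TensorProduct.map (RXdeg X k).subtype (Vn X n).subtype) (Cg (a, b)).subtype)

/-- The bidegree-(i,j) part of `C̄`: the x's have bidegree (0,-2) and the ξ's (1,2). -/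
def CbarDeg (Cg : ℤ × ℤ → Submodule F2 C) (i j : ℤ) : Submodule F2 (Cbar X C) :=
  ⨆ (a : ℤ) (b : ℤ) (k : ℕ) (n : ℕ)
    (_ : i = a - n ∧ j = b - 2 * k - 2 * n), piece X C Cg a b k n

/-!
Projecting onto one graded piece of `C` and then onto a line in it is an endomorphism of
bidegree `(0,0)`, so the rigidity of `End(C)` forces `C = F₂·c₀` with `c₀` in a single bidegree; in
particular `d` and `ρ` vanish. Then `C̄ ≅ R_X ⊗ Ξ_X` with differential `∑ₓ x ⊗ ξₓ`, and for degree
reasons `φ` restricts to a degree-preserving map `f` of `Ξ_X ≅ 1 ⊗ Ξ_X ⊗ c₀`. Comparing the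
`x`-components of `φ ∂̄ = ∂̄ φ` gives `ξₓ f = f ξₓ`. The `ξₓ` have no common kernel in positive
degree, so induction on the degree gives `f = c • id` with `c = f(1) ∈ F₂`, and `R_X`-linearity
spreads this to `φ = c • id`.
-/

section Xi

variable {σ : Type}

lemma Vn_eq_supported (k : ℕ) : Vn σ k = Finsupp.supported F2 F2 {n | n.degree = k} := by
  rw [Finsupp.supported_eq_span_single, Vn]
  congr 1
  ext v
  exact ⟨fun ⟨n, hn, hv⟩ => ⟨n, hn, hv.symm⟩, fun ⟨n, hn, hv⟩ => ⟨n, hn, hv.symm⟩⟩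

lemma ximon_mem_Vn (n : σ →₀ ℕ) : ximon n ∈ Vn σ n.degree := by
  rw [Vn_eq_supported]
  exact Finsupp.single_mem_supported F2 1 rfl

lemma eq_smul_ximon_zero_of_mem_Vn_zero {u : XiX σ} (hu : u ∈ Vn σ 0) : u = u 0 • ximon 0 := by
  have : {n : σ →₀ ℕ | n.degree = 0} = {0} := by ext n; simp [Finsupp.degree_eq_zero_iff]
  rw [Vn_eq_supported, Finsupp.mem_supported, this, ← Finset.coe_singleton, Finset.coe_subset]
    at hu
  rw [ximon, Finsupp.smul_single_one]
  exact Finsupp.support_subset_singleton.mp hu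

lemma degree_tsub_single_add_one {n : σ →₀ ℕ} {x : σ} (hx : n x ≠ 0) :
    (n - Finsupp.single x 1).degree + 1 = n.degree := by
  have : Finsupp.single x 1 ≤ n := Finsupp.single_le_iff.mpr (Nat.one_le_iff_ne_zero.mpr hx)
  conv_rhs => rw [← tsub_add_cancel_of_le this]
  rw [map_add, Finsupp.degree_single]

variable [DecidableEq σ]

lemma xiMul_single (x : σ) (n : σ →₀ ℕ) (b : F2) :
    xiMul x (Finsupp.single n b) =
      if n x = 0 then 0 else Finsupp.single (n - Finsupp.single x 1) b := by
  simp only [xiMul, Finsupp.lsum_single]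
  split <;> simp

lemma xiMul_apply_tsub_single (x : σ) (u : XiX σ) {m : σ →₀ ℕ} (hm : m x ≠ 0) :
    xiMul x u (m - Finsupp.single x 1) = u m := by
  induction u using Finsupp.induction_linear with
  | zero => simp
  | add u v hu hv => simp [hu, hv]
  | single n b =>
    rw [xiMul_single]
    split_ifs with hn
    · simp [show n ≠ m by rintro rfl; exact hm hn]
    · have hle : ∀ k : σ →₀ ℕ, k x ≠ 0 → Finsupp.single x 1 ≤ k := fun k hk =>
        Finsupp.single_le_iff.mpr (Nat.one_le_iff_ne_zero.mpr hk)
      simp [Finsupp.single_apply, tsub_left_inj (hle n hn) (hle m hm)]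

lemma eq_zero_of_forall_xiMul_eq_zero {k : ℕ} {u : XiX σ} (hu : u ∈ Vn σ (k + 1))
    (h : ∀ x, xiMul x u = 0) : u = 0 := by
  rw [Vn_eq_supported, Finsupp.mem_supported] at hu
  refine Finsupp.support_eq_empty.mp (Finset.eq_empty_of_forall_notMem fun m hm => ?_)
  obtain ⟨x, hx⟩ : ∃ x, m x ≠ 0 := by
    by_contra! h0
    have : m.degree = k + 1 := hu hm
    simp [show m = 0 from Finsupp.ext h0] at this
  have := xiMul_apply_tsub_single x u hx
  rw [h x] at this
  exact Finsupp.mem_support_iff.mp hm this.symm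

lemma eq_zero_of_commute_xiMul (g : XiX σ →ₗ[F2] XiX σ) (hV : ∀ k, ∀ u ∈ Vn σ k, g u ∈ Vn σ k)
    (hξ : ∀ x, g ∘ₗ xiMul x = xiMul x ∘ₗ g) (h0 : g (ximon 0) = 0) : g = 0 := by
  suffices h : ∀ k (n : σ →₀ ℕ), n.degree = k → g (ximon n) = 0 from
    Finsupp.lhom_ext' fun n => LinearMap.ext_ring (h _ n rfl)
  intro k
  induction k with
  | zero => intro n hn; rwa [(Finsupp.degree_eq_zero_iff n).mp hn]
  | succ k ih =>
    intro n hn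
    refine eq_zero_of_forall_xiMul_eq_zero (hn ▸ hV _ _ (ximon_mem_Vn n)) fun x => ?_
    rw [← LinearMap.comp_apply, ← hξ, LinearMap.comp_apply, ximon, xiMul_single]
    split_ifs with hx
    · exact map_zero g
    · exact ih _ (by have := degree_tsub_single_add_one hx; omega)

lemma eq_smul_id_of_commute_xiMul (f : XiX σ →ₗ[F2] XiX σ) (hV : ∀ k, ∀ u ∈ Vn σ k, f u ∈ Vn σ k)
    (hξ : ∀ x, f ∘ₗ xiMul x = xiMul x ∘ₗ f) : f = f (ximon 0) 0 • LinearMap.id := by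
  refine sub_eq_zero.mp (eq_zero_of_commute_xiMul _ (fun k u hu => ?_) (fun x => ?_) ?_)
  · exact sub_mem (hV k u hu) (Submodule.smul_mem _ _ hu)
  · simp only [LinearMap.sub_comp, LinearMap.comp_sub, LinearMap.smul_comp, LinearMap.comp_smul,
      LinearMap.id_comp, LinearMap.comp_id, hξ x]
  · rw [LinearMap.sub_apply, sub_eq_zero]
    exact eq_smul_ximon_zero_of_mem_Vn_zero (hV 0 _ (ximon_mem_Vn 0))

end Xi

namespace Rgen

variable {σ : Type}

def lift {A : Type} [CommRing A] [Algebra F2 A] (v : σ → A) (hv : ∀ x, v x ^ 2 = 0) :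
    Rgen σ →ₐ[F2] A :=
  Ideal.Quotient.liftₐ _ (MvPolynomial.aeval v) fun a ha => by
    rw [← RingHom.mem_ker]
    refine (Ideal.span_le.mpr ?_) ha
    rintro _ ⟨x, rfl⟩
    simp [hv x]

@[simp]
lemma lift_rgen {A : Type} [CommRing A] [Algebra F2 A] (v : σ → A) (hv : ∀ x, v x ^ 2 = 0)
    (x : σ) : lift v hv (rgen x) = v x := by
  rw [lift, rgen, ← Ideal.Quotient.mkₐ_eq_mk F2, ← AlgHom.comp_apply, Ideal.Quotient.liftₐ_comp,
    MvPolynomial.aeval_X]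

lemma adjoin_range_rgen : Algebra.adjoin F2 (Set.range (rgen : σ → Rgen σ)) = ⊤ := by
  have h := congrArg (Subalgebra.map (Ideal.Quotient.mkₐ F2 _ : MvPolynomial σ F2 →ₐ[F2] Rgen σ))
    (MvPolynomial.adjoin_range_X (R := F2) (σ := σ))
  rwa [AlgHom.map_adjoin, ← Set.range_comp, Algebra.map_top,
    (AlgHom.range_eq_top _).mpr (Ideal.Quotient.mkₐ_surjective F2 _)] at h

def constCoeff : Rgen σ →ₐ[F2] F2 := lift (fun _ => 0) fun _ => zero_pow two_ne_zero

variable [DecidableEq σ]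

def coeff (x₀ : σ) : Rgen σ →ₗ[F2] F2 :=
  TrivSqZeroExt.sndHom F2 F2 ∘ₗ
    (lift (Pi.single x₀ DualNumber.eps) fun x => by
      rcases eq_or_ne x x₀ with rfl | hx <;> simp [*, sq]).toLinearMap

lemma coeff_rgen (x₀ x : σ) : coeff x₀ (rgen x) = if x = x₀ then 1 else 0 := by
  rcases eq_or_ne x x₀ with rfl | hx <;> simp [coeff, *]

end Rgen

lemma RXdeg_zero {σ : Type} : RXdeg σ 0 = F2 ∙ 1 := by
  rw [RXdeg]
  congr 1
  ext y
  refine ⟨fun ⟨m, hm, hy⟩ => ?_, fun hy => ⟨0, rfl, by rw [Set.mem_singleton_iff.mp hy]; simp⟩⟩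
  rw [hy, (Finsupp.degree_eq_zero_iff m).mp hm]
  simp

lemma DirectSum.IsInternal.eq_bot_and_mem_span_of_forall_eq_zero_or_eq_id
    {K ι V : Type*} [Field K] [AddCommGroup V] [Module K V] [DecidableEq ι]
    {Vg : ι → Submodule K V} (hint : DirectSum.IsInternal Vg)
    (hEnd : ∀ e : V →ₗ[K] V, (∀ i, ∀ v ∈ Vg i, e v ∈ Vg i) → e = 0 ∨ e = LinearMap.id)
    {p : ι} {v₀ : V} (hv₀p : v₀ ∈ Vg p) (hv₀ : v₀ ≠ 0) :
    (∀ q ≠ p, Vg q = ⊥) ∧ ∀ v, v ∈ K ∙ v₀ := by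
  let := hint.chooseDecomposition
  obtain ⟨μ, hμ⟩ := Module.Projective.exists_dual_eq_one K hv₀
  let π : V →ₗ[K] V := (Vg p).subtype ∘ₗ DirectSum.component K ι (fun i => Vg i) p ∘ₗ
    (DirectSum.decomposeLinearEquiv Vg).toLinearMap
  have hπ : ∀ i, ∀ v ∈ Vg i, π v = if i = p then v else 0 := by
    intro i v hv
    split_ifs with hi
    · subst hi; exact DirectSum.decompose_of_mem_same Vg hv
    · exact DirectSum.decompose_of_mem_ne Vg hv hi
  let e := LinearMap.toSpanSingleton K V v₀ ∘ₗ μ ∘ₗ π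
  have he : e = LinearMap.id := by
    refine (hEnd e fun i v hv => ?_).resolve_left fun h => hv₀ ?_
    · by_cases hi : i = p
      · subst hi; exact Submodule.smul_mem _ _ hv₀p
      · simp [e, hπ i v hv, hi]
    · simpa [e, hπ p v₀ hv₀p, hμ] using LinearMap.congr_fun h v₀
  refine ⟨fun q hq => (Submodule.eq_bot_iff _).mpr fun v hv => ?_, fun v => ?_⟩
  · simpa [e, hπ q v hv, hq, eq_comm] using LinearMap.congr_fun he v
  · rw [← LinearMap.id_apply (R := K) v, ← he]
    exact Submodule.mem_span_singleton.mpr ⟨_, rfl⟩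

namespace Cbar

open TensorProduct

variable {σ M : Type} [AddCommGroup M] [Module F2 M]

def ofXi (m₀ : M) : XiX σ →ₗ[F2] Cbar σ M :=
  (TensorProduct.mk F2 _ M).flip m₀ ∘ₗ TensorProduct.mk F2 (Rgen σ) (XiX σ) 1

lemma ofXi_apply (m₀ : M) (u : XiX σ) : ofXi m₀ u = ((1 : Rgen σ) ⊗ₜ u) ⊗ₜ m₀ := rfl

def mulAlgHom : Rgen σ →ₐ[F2] Module.End F2 (Cbar σ M) :=
  (Module.End.rTensorAlgHom F2 _ M).comp
    ((Module.End.rTensorAlgHom F2 _ (XiX σ)).comp (Algebra.lmul F2 (Rgen σ)))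

@[simp]
lemma mulAlgHom_tmul (r s : Rgen σ) (u : XiX σ) (m : M) :
    mulAlgHom r ((s ⊗ₜ u) ⊗ₜ m) = ((r * s) ⊗ₜ u) ⊗ₜ m := rfl

lemma mulAlgHom_rgen (x : σ) : mulAlgHom (rgen x) = midMul σ M x := rfl

lemma commute_mulAlgHom {φ : Cbar σ M →ₗ[F2] Cbar σ M}
    (hR : ∀ x, φ ∘ₗ midMul σ M x = midMul σ M x ∘ₗ φ) (r : Rgen σ) :
    φ ∘ₗ mulAlgHom r = mulAlgHom r ∘ₗ φ := by
  have : Algebra.adjoin F2 (Set.range rgen) ≤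
      (Subalgebra.centralizer F2 {φ}).comap (mulAlgHom (M := M)) :=
    Algebra.adjoin_le <| by
      rintro _ ⟨x, rfl⟩
      rw [SetLike.mem_coe, Subalgebra.mem_comap, mulAlgHom_rgen, Subalgebra.mem_centralizer_iff]
      rintro _ rfl
      exact hR x
  rw [Rgen.adjoin_range_rgen] at this
  exact this Algebra.mem_top φ rfl

def contract (g : Rgen σ →ₗ[F2] F2) (μ : M →ₗ[F2] F2) : Cbar σ M →ₗ[F2] XiX σ :=
  (TensorProduct.rid F2 (XiX σ)).toLinearMap ∘ₗ
    map ((TensorProduct.lid F2 (XiX σ)).toLinearMap ∘ₗ map g LinearMap.id) μ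

@[simp]
lemma contract_tmul (g : Rgen σ →ₗ[F2] F2) (μ : M →ₗ[F2] F2) (r : Rgen σ) (u : XiX σ) (m : M) :
    contract g μ ((r ⊗ₜ u) ⊗ₜ m) = (g r * μ m) • u := by
  simp [contract, mul_smul, smul_comm (μ m)]

lemma map_ofXi_Vn_eq_CbarDeg {Mg : ℤ × ℤ → Submodule F2 M} {a₀ b₀ : ℤ} {m₀ : M}
    (hm₀ : m₀ ∈ Mg (a₀, b₀)) (hspan : ∀ m, m ∈ F2 ∙ m₀) (hbot : ∀ q ≠ (a₀, b₀), Mg q = ⊥)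
    (n : ℕ) : (Vn σ n).map (ofXi m₀) = CbarDeg σ M Mg (a₀ - n) (b₀ - 2 * n) := by
  apply le_antisymm
  · rw [Submodule.map_le_iff_le_comap]
    intro u hu
    have hle : piece σ M Mg a₀ b₀ 0 n ≤ CbarDeg σ M Mg (a₀ - n) (b₀ - 2 * n) :=
      le_iSup_of_le a₀ <| le_iSup_of_le b₀ <| le_iSup_of_le 0 <| le_iSup_of_le n <|
        le_iSup_of_le ⟨rfl, by ring⟩ le_rfl
    have h1 : (1 : Rgen σ) ∈ RXdeg σ 0 := RXdeg_zero ▸ Submodule.mem_span_singleton_self 1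
    exact hle ⟨(⟨1, h1⟩ ⊗ₜ ⟨u, hu⟩) ⊗ₜ ⟨m₀, hm₀⟩, rfl⟩
  · refine iSup_le fun a => iSup_le fun b => iSup_le fun k => iSup_le fun n' =>
      iSup_le fun ⟨hi, hj⟩ => ?_
    rw [piece, TensorProduct.range_map, TensorProduct.range_mapIncl, Submodule.range_subtype]
    by_cases hab : (a, b) = (a₀, b₀)
    · obtain ⟨rfl, rfl⟩ := Prod.ext_iff.mp hab
      obtain ⟨rfl, rfl⟩ : k = 0 ∧ n = n' := by omega
      have hline : Submodule.map₂ (TensorProduct.mk F2 _ _) (RXdeg σ 0) (Vn σ n) ≤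
          ((Vn σ n).map (ofXi m₀)).comap ((TensorProduct.mk F2 _ M).flip m₀) := by
        rw [RXdeg_zero, Submodule.map₂_le]
        intro r hr u hu
        obtain ⟨α, rfl⟩ := Submodule.mem_span_singleton.mp hr
        exact ⟨α • u, Submodule.smul_mem _ _ hu, by simp [ofXi_apply, TensorProduct.smul_tmul']⟩
      rw [Submodule.map₂_le]
      intro t ht m _
      obtain ⟨γ, rfl⟩ := Submodule.mem_span_singleton.mp (hspan m)
      rw [TensorProduct.mk_apply, TensorProduct.tmul_smul]
      exact Submodule.smul_mem _ _ (hline ht)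
    · rw [hbot _ hab, Submodule.map₂_bot_right]
      exact bot_le

lemma eq_smul_id_of_comp_ofXi_eq {m₀ : M} (hspan : ∀ m, m ∈ F2 ∙ m₀)
    {φ : Cbar σ M →ₗ[F2] Cbar σ M} (hR : ∀ x, φ ∘ₗ midMul σ M x = midMul σ M x ∘ₗ φ) {c : F2}
    (h : φ ∘ₗ ofXi m₀ = c • ofXi m₀) : φ = c • LinearMap.id := by
  refine TensorProduct.ext_threefold fun r u m => ?_
  obtain ⟨γ, rfl⟩ := Submodule.mem_span_singleton.mp (hspan m)
  have hgen : (r ⊗ₜ u) ⊗ₜ (γ • m₀) = γ • mulAlgHom r (ofXi m₀ u) := by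
    simp [ofXi_apply, TensorProduct.tmul_smul]
  rw [hgen, map_smul, ← LinearMap.comp_apply φ, commute_mulAlgHom hR, LinearMap.comp_apply,
    ← LinearMap.comp_apply φ, h]
  simp [smul_comm γ c]

lemma exists_comp_ofXi_eq {m₀ : M} (hm₀ : m₀ ≠ 0) {φ : Cbar σ M →ₗ[F2] Cbar σ M}
    (hφ : ∀ n, ∀ v ∈ (Vn σ n).map (ofXi m₀), φ v ∈ (Vn σ n).map (ofXi m₀)) :
    ∃ f : XiX σ →ₗ[F2] XiX σ,
      (∀ n, ∀ u ∈ Vn σ n, f u ∈ Vn σ n) ∧ φ ∘ₗ ofXi m₀ = ofXi m₀ ∘ₗ f := by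
  obtain ⟨μ, hμ⟩ := Module.Projective.exists_dual_eq_one F2 hm₀
  let retr : Cbar σ M →ₗ[F2] XiX σ := contract Rgen.constCoeff.toLinearMap μ
  have hretr : ∀ u, retr (ofXi m₀ u) = u := by simp [retr, ofXi_apply, hμ]
  have hlift : ∀ n, ∀ u ∈ Vn σ n, ∃ w ∈ Vn σ n, ofXi m₀ w = φ (ofXi m₀ u) :=
    fun n u hu => hφ n _ (Submodule.mem_map_of_mem hu)
  refine ⟨retr ∘ₗ φ ∘ₗ ofXi m₀, fun n u hu => ?_, Finsupp.lhom_ext' fun n =>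
    LinearMap.ext_ring ?_⟩
  · obtain ⟨w, hw, hφw⟩ := hlift n u hu
    change retr (φ (ofXi m₀ u)) ∈ Vn σ n
    rwa [← hφw, hretr]
  · obtain ⟨w, -, hφw⟩ := hlift _ _ (ximon_mem_Vn n)
    change φ (ofXi m₀ (ximon n)) = ofXi m₀ (retr (φ (ofXi m₀ (ximon n))))
    rw [← hφw, hretr]

variable [DecidableEq σ]

lemma contract_coeff_midMul_ofXi {μ : M →ₗ[F2] F2} {m₀ : M} (hμ : μ m₀ = 1) (x₀ x : σ)
    (v : XiX σ) :
    contract (Rgen.coeff x₀) μ (midMul σ M x (ofXi m₀ v)) = if x = x₀ then v else 0 := by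
  rw [← mulAlgHom_rgen]
  split_ifs <;> simp [ofXi_apply, Rgen.coeff_rgen, *]

variable [Fintype σ]

lemma delBar_ofXi {d : M →ₗ[F2] M} {ρ : σ → M →ₗ[F2] M} {m₀ : M} (hd : d m₀ = 0)
    (hρ : ∀ x, ρ x m₀ = 0) (u : XiX σ) :
    delBar σ M d ρ (ofXi m₀ u) = ∑ x, midMul σ M x (ofXi m₀ (xiMul x u)) := by
  simp [delBar, midMul, ofXi_apply, hd, hρ]

lemma commute_xiMul_of_comp_ofXi_eq {d : M →ₗ[F2] M} {ρ : σ → M →ₗ[F2] M} {m₀ : M}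
    (hm₀ : m₀ ≠ 0) (hd : d m₀ = 0) (hρ : ∀ x, ρ x m₀ = 0) {φ : Cbar σ M →ₗ[F2] Cbar σ M}
    (hR : ∀ x, φ ∘ₗ midMul σ M x = midMul σ M x ∘ₗ φ)
    (hchain : φ ∘ₗ delBar σ M d ρ = delBar σ M d ρ ∘ₗ φ) {f : XiX σ →ₗ[F2] XiX σ}
    (hf : φ ∘ₗ ofXi m₀ = ofXi m₀ ∘ₗ f) (x₀ : σ) : f ∘ₗ xiMul x₀ = xiMul x₀ ∘ₗ f := by
  obtain ⟨μ, hμ⟩ := Module.Projective.exists_dual_eq_one F2 hm₀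
  have hφ : ∀ v, φ (ofXi m₀ v) = ofXi m₀ (f v) := LinearMap.congr_fun hf
  have hRx : ∀ x v, φ (midMul σ M x v) = midMul σ M x (φ v) := fun x => LinearMap.congr_fun (hR x)
  refine LinearMap.ext fun u => ?_
  have h := congrArg (contract (Rgen.coeff x₀) μ) (LinearMap.congr_fun hchain (ofXi m₀ u))
  simpa [delBar_ofXi hd hρ, hRx, hφ, contract_coeff_midMul_ofXi hμ] using h

end Cbar

theorem stmt18
    (d : C →ₗ[F2] C)
    (Cg : ℤ × ℤ → Submodule F2 C)
    (hint : DirectSum.IsInternal Cg)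
    -- the differential has bidegree (1,0)
    (hddeg : ∀ a b : ℤ, ∀ c ∈ Cg (a, b), d c ∈ Cg (a + 1, b))
    -- any R_X-action ρ on C by commuting square-zero chain operators of bidegree (0,-2)
    (ρ : X → C →ₗ[F2] C)
    (hρdeg : ∀ x, ∀ a b : ℤ, ∀ c ∈ Cg (a, b), ρ x c ∈ Cg (a, b - 2))
    -- End(C) is supported in bidegrees (0,q), q ≤ 0, with (0,0)-part spanned by Id:
    (hEnd0 : ∀ e : C →ₗ[F2] C,
      (∀ a b : ℤ, ∀ c ∈ Cg (a, b), e c ∈ Cg (a, b)) → e = 0 ∨ e = LinearMap.id) :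
    -- every nonzero R_X-linear chain endomorphism of C̄ of bidegree (0,0) is the identity
    ∀ φ : Cbar X C →ₗ[F2] Cbar X C,
      (∀ x : X, φ.comp (midMul X C x) = (midMul X C x).comp φ) →
      φ.comp (delBar X C d ρ) = (delBar X C d ρ).comp φ →
      (∀ i j : ℤ, ∀ v ∈ CbarDeg X C Cg i j, φ v ∈ CbarDeg X C Cg i j) →
      φ ≠ 0 → φ = LinearMap.id := by
  intro φ hR hchain hdeg hne
  obtain ⟨p, c₀, hc₀p, hc₀⟩ : ∃ p, ∃ c₀ ∈ Cg p, c₀ ≠ 0 := by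
    by_contra! hzero
    have htop : (⊤ : Submodule F2 C) = ⊥ := by
      rw [← hint.submodule_iSup_eq_top, iSup_eq_bot]
      exact fun p => (Submodule.eq_bot_iff _).mpr (hzero p)
    have : Subsingleton C := subsingleton_of_forall_eq 0 fun c => by
      simpa [htop] using (Submodule.mem_top : c ∈ (⊤ : Submodule F2 C))
    exact hne (Subsingleton.elim _ _)
  obtain ⟨hbot, hspan⟩ := hint.eq_bot_and_mem_span_of_forall_eq_zero_or_eq_id
    (fun e he => hEnd0 e fun a b => he (a, b)) hc₀p hc₀
  obtain ⟨a₀, b₀⟩ := p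
  have hd : d c₀ = 0 := by simpa [hbot (a₀ + 1, b₀) (by simp)] using hddeg a₀ b₀ c₀ hc₀p
  have hρ : ∀ x, ρ x c₀ = 0 := fun x => by
    simpa [hbot (a₀, b₀ - 2) (by simp)] using hρdeg x a₀ b₀ c₀ hc₀p
  obtain ⟨f, hfV, hf⟩ := Cbar.exists_comp_ofXi_eq hc₀ fun n => by
    rw [Cbar.map_ofXi_Vn_eq_CbarDeg hc₀p hspan hbot]
    exact hdeg _ _
  obtain ⟨c, hfc⟩ : ∃ c : F2, f = c • LinearMap.id := ⟨_, eq_smul_id_of_commute_xiMul f hfV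
    (Cbar.commute_xiMul_of_comp_ofXi_eq hc₀ hd hρ hR hchain hf)⟩
  have hφ := Cbar.eq_smul_id_of_comp_ofXi_eq hspan hR (c := c)
    (by rw [hf, hfc, LinearMap.comp_smul, LinearMap.comp_id])
  fin_cases c
  · exact absurd (hφ.trans (zero_smul _ _)) hne
  · exact hφ.trans (one_smul _ _)
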